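/- Let n ≥ 1, let R = ∏_{i=1}^n [a_i, b_i] be a compact rectangle in ℝⁿ, and let μ and ν be positive Borel measures that are finite on R. Then there exist a point θ = (θ₁,…,θ_n) ∈ R and, for each i, a labeling of the two closed subintervals [a_i, θ_i] and [θ_i, b_i] as I_i^* and I_i^{**} (so {I_i^*, I_i^{**}} = {[a_i,θ_i], [θ_i,b_i]}), such that the closed rectangles G := ∏_{i=1}^n I_i^* and H := ∏_{i=1}^n I_i^{**} satisfy μ(G) ≥ 2^{−n} μ(R) and ν(H) ≥ 2^{−n} ν(R). In particular G ∩ H = {θ}, and G and H lie in closed opposite n-ants with common vertex θ. -/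

import Mathlib

/-!
Fix the coordinates one at a time. For a set `A` of finite `μ`-measure, a median `θᵢ` of the
`i`-th coordinate of `μ` restricted to `A` (the least point where its distribution function
reaches half the mass; finiteness gives the continuity of measure needed there) splits `A` into
two closed halves, each carrying at least `μ A / 2`; of the two opposite halves of the current
`ν`-set `B`, one carries at least `ν B / 2`. Keep that half for `ν` and the other one for `μ`.
After `n` steps the `μ`-set and the `ν`-set lie in opposite closed `n`-ants at `θ` and have
lost at most a factor `2` per step.
-/

open MeasureTheory Set Filter Topology
open scoped ENNReal

section ContinuityAtThreshold

variable {α : Type*} [LinearOrder α] [TopologicalSpace α] [OrderTopology α] [DenselyOrdered α]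
  [FirstCountableTopology α] [MeasurableSpace α] [OpensMeasurableSpace α]
  {ρ : Measure α} [IsFiniteMeasure ρ] {c : ℝ≥0∞} {θ : α}

theorem le_measure_Iic_of_forall_gt [NoMaxOrder α] (h : ∀ r > θ, c ≤ ρ (Iic r)) :
    c ≤ ρ (Iic θ) := by
  have hIic : ⋂ r > θ, Iic r = Iic θ := by
    ext x
    simpa only [mem_iInter₂, mem_Iic] using forall_gt_imp_ge_iff_le_of_dense
  have hlim : Tendsto (fun r ↦ ρ (Iic r)) (𝓝[>] θ) (𝓝 (ρ (Iic θ))) := by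
    rw [← hIic]
    obtain ⟨r, hr⟩ := exists_gt θ
    exact tendsto_measure_biInter_gt (fun _ _ ↦ measurableSet_Iic.nullMeasurableSet)
      (fun _ _ _ hij ↦ Iic_subset_Iic.2 hij) ⟨r, hr, measure_ne_top ρ _⟩
  exact ge_of_tendsto hlim (eventually_nhdsWithin_of_forall h)

theorem le_measure_Ici_of_forall_lt [NoMinOrder α] (h : ∀ r < θ, c ≤ ρ (Ici r)) :
    c ≤ ρ (Ici θ) :=
  have : IsFiniteMeasure (α := αᵒᵈ) ρ := ‹_›
  le_measure_Iic_of_forall_gt (α := αᵒᵈ) h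

end ContinuityAtThreshold

theorem ENNReal.half_le_or_half_le_of_le_add {m x y : ℝ≥0∞} (h : m ≤ x + y) :
    m / 2 ≤ x ∨ m / 2 ≤ y := by
  by_contra! hlt
  exact (h.trans_lt (ENNReal.add_lt_add hlt.1 hlt.2)).ne (ENNReal.add_halves m).symm

theorem exists_median_mem_Icc {ρ : Measure ℝ} [IsFiniteMeasure ρ] {a b : ℝ} (hab : a ≤ b)
    (hρ : ρ (Icc a b) = ρ univ) :
    ∃ θ ∈ Icc a b, ρ univ / 2 ≤ ρ (Iic θ) ∧ ρ univ / 2 ≤ ρ (Ici θ) := by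
  set S := {t ∈ Icc a b | ρ univ / 2 ≤ ρ (Iic t)}
  have hbS : b ∈ S := ⟨right_mem_Icc.2 hab,
    ENNReal.half_le_self.trans (hρ ▸ measure_mono Icc_subset_Iic_self)⟩
  have hS : S.Nonempty := ⟨b, hbS⟩
  have hSbdd : BddBelow S := ⟨a, fun t ht ↦ ht.1.1⟩
  have hSa : a ≤ sInf S := le_csInf hS fun t ht ↦ ht.1.1
  have hSb : sInf S ≤ b := csInf_le hSbdd hbS
  refine ⟨sInf S, ⟨hSa, hSb⟩, le_measure_Iic_of_forall_gt fun r hr ↦ ?_,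
    le_measure_Ici_of_forall_lt fun r hr ↦ ?_⟩
  · obtain ⟨t, ht, htr⟩ := exists_lt_of_csInf_lt hS hr
    exact ht.2.trans (measure_mono (Iic_subset_Iic.2 htr.le))
  · rcases lt_or_ge r a with hra | hra
    · exact ENNReal.half_le_self.trans
        (hρ ▸ measure_mono (Icc_subset_Ici_self.trans (Ici_subset_Ici.2 hra.le)))
    · have hrS : r ∉ S := fun hrS ↦ (csInf_le hSbdd hrS).not_gt hr
      have hcover : ρ univ ≤ ρ (Iic r) + ρ (Ici r) := by
        rw [← Iic_union_Ici]
        exact measure_union_le _ _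
      exact (ENNReal.half_le_or_half_le_of_le_add hcover).resolve_left
        fun h ↦ hrS ⟨⟨hra, hr.le.trans hSb⟩, h⟩

/-- The closed half-line `{x | m (x - θ) ≥ 0}` with sign `m = -1` if `s` and `m = 1` otherwise. -/
def halfLine (s : Bool) (θ : ℝ) : Set ℝ :=
  {x | if s then x ≤ θ else θ ≤ x}

theorem mem_halfLine_not_iff (s : Bool) (θ x : ℝ) :
    x ∈ halfLine (!s) θ ↔ if s then θ ≤ x else x ≤ θ := by
  cases s <;> rfl

theorem halfLine_inter_halfLine_not (s : Bool) (θ : ℝ) :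
    halfLine s θ ∩ halfLine (!s) θ = {θ} := by
  ext x
  cases s <;> simp only [halfLine, Bool.not_false, Bool.not_true, ↓reduceIte, mem_inter_iff,
    mem_ofPred_eq, mem_singleton_iff] <;> grind

theorem ite_mem_Icc_iff_mem_Icc_and_halfLine {a b θ x : ℝ} (hθ : θ ∈ Icc a b) (s : Bool) :
    (if s then x ∈ Icc a θ else x ∈ Icc θ b) ↔ x ∈ Icc a b ∧ x ∈ halfLine s θ := by
  obtain ⟨haθ, hθb⟩ := hθ
  cases s <;> simp only [halfLine, Bool.false_eq_true, ↓reduceIte, mem_Icc, mem_ofPred_eq] <;>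
    grind

theorem exists_opposite_halfLines_half_le {α : Type*} [MeasurableSpace α] {μ ν : Measure α}
    {A B : Set α} (hA : μ A ≠ ∞) {f : α → ℝ} (hf : Measurable f) {a b : ℝ} (hab : a ≤ b)
    (hfA : MapsTo f A (Icc a b)) :
    ∃ θ ∈ Icc a b, ∃ s : Bool,
      μ A / 2 ≤ μ (A ∩ f ⁻¹' halfLine s θ) ∧ ν B / 2 ≤ ν (B ∩ f ⁻¹' halfLine (!s) θ) := by
  have : IsFiniteMeasure (μ.restrict A) := isFiniteMeasure_restrict.2 hA
  have hρ : ∀ {t : Set ℝ}, MeasurableSet t → (μ.restrict A).map f t = μ (A ∩ f ⁻¹' t) :=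
    fun ht ↦ by rw [Measure.map_apply hf ht, Measure.restrict_apply (hf ht), inter_comm]
  have hρuniv : (μ.restrict A).map f univ = μ A := by
    rw [hρ MeasurableSet.univ, preimage_univ, inter_univ]
  have hρIcc : (μ.restrict A).map f (Icc a b) = (μ.restrict A).map f univ := by
    rw [hρ measurableSet_Icc, hρuniv, inter_eq_left.2 hfA.subset_preimage]
  obtain ⟨θ, hθ, hIic, hIci⟩ := exists_median_mem_Icc hab hρIcc
  rw [hρuniv, hρ measurableSet_Iic] at hIic
  rw [hρuniv, hρ measurableSet_Ici] at hIci
  have hcover : ν B ≤ ν (B ∩ f ⁻¹' Ici θ) + ν (B ∩ f ⁻¹' Iic θ) := by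
    refine (measure_mono fun x hx ↦ ?_).trans (measure_union_le _ _)
    exact (le_total θ (f x)).imp (⟨hx, ·⟩) (⟨hx, ·⟩)
  rcases ENNReal.half_le_or_half_le_of_le_add hcover with hν | hν
  exacts [⟨θ, hθ, true, hIic, hν⟩, ⟨θ, hθ, false, hIci, hν⟩]

section Orthant

variable {α ι : Type*}

/-- For `J = univ` and the coordinate projections `f j`, the closed `n`-ant at `θ` whose
signature is `-1` exactly at the `j` with `s j`. -/
def orthant (J : Finset ι) (f : ι → α → ℝ) (θ : ι → ℝ) (s : ι → Bool) : Set α :=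
  {x | ∀ j ∈ J, f j x ∈ halfLine (s j) (θ j)}

@[simp]
theorem orthant_empty (f : ι → α → ℝ) (θ : ι → ℝ) (s : ι → Bool) : orthant ∅ f θ s = univ := by
  simp [orthant]

theorem orthant_insert_update [DecidableEq ι] {J : Finset ι} {i : ι} (hi : i ∉ J)
    (f : ι → α → ℝ) (θ : ι → ℝ) (s : ι → Bool) (t : ℝ) (c : Bool) :
    orthant (insert i J) f (Function.update θ i t) (Function.update s i c) =
      orthant J f θ s ∩ f i ⁻¹' halfLine c t := by
  ext x
  simp only [orthant, Finset.forall_mem_insert, Function.update_self, mem_ofPred_eq,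
    mem_inter_iff, mem_preimage, and_comm]
  refine and_congr_right' (forall₂_congr fun j hj ↦ ?_)
  rw [Function.update_of_ne (ne_of_mem_of_not_mem hj hi),
    Function.update_of_ne (ne_of_mem_of_not_mem hj hi)]

theorem orthant_inter_orthant_not (J : Finset ι) (f : ι → α → ℝ) (θ : ι → ℝ) (s : ι → Bool) :
    orthant J f θ s ∩ orthant J f θ (not ∘ s) = {x | ∀ j ∈ J, f j x = θ j} := by
  ext x
  change (∀ j ∈ J, _) ∧ (∀ j ∈ J, _) ↔ ∀ j ∈ J, _
  rw [← forall₂_and]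
  refine forall₂_congr fun j _ ↦ ?_
  rw [← mem_inter_iff, Function.comp_apply, halfLine_inter_halfLine_not, mem_singleton_iff]

theorem setOf_forall_ite_mem_Icc_eq_inter_orthant [Fintype ι] {f : ι → α → ℝ}
    {a b θ : ι → ℝ} (hθ : ∀ i, θ i ∈ Icc (a i) (b i)) (s : ι → Bool) :
    {x | ∀ i, if s i then f i x ∈ Icc (a i) (θ i) else f i x ∈ Icc (θ i) (b i)} =
      {x | ∀ i, f i x ∈ Icc (a i) (b i)} ∩ orthant Finset.univ f θ s := by
  ext x
  simp only [orthant, mem_inter_iff, mem_ofPred_eq, Finset.mem_univ, true_imp_iff, ← forall_and,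
    ite_mem_Icc_iff_mem_Icc_and_halfLine (hθ _)]

theorem setOf_forall_ite_mem_Icc_eq_inter_orthant_not [Fintype ι] {f : ι → α → ℝ}
    {a b θ : ι → ℝ} (hθ : ∀ i, θ i ∈ Icc (a i) (b i)) (s : ι → Bool) :
    {x | ∀ i, if s i then f i x ∈ Icc (θ i) (b i) else f i x ∈ Icc (a i) (θ i)} =
      {x | ∀ i, f i x ∈ Icc (a i) (b i)} ∩ orthant Finset.univ f θ (not ∘ s) := by
  rw [← setOf_forall_ite_mem_Icc_eq_inter_orthant hθ]
  ext x
  exact forall_congr' fun i ↦ by rw [Function.comp_apply]; cases s i <;> rfl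

end Orthant

theorem exists_opposite_orthants_div_two_pow_le {α ι : Type*} [MeasurableSpace α]
    {μ ν : Measure α} {R : Set α} (hR : μ R ≠ ∞) {f : ι → α → ℝ} (hf : ∀ i, Measurable (f i))
    {a b : ι → ℝ} (hab : ∀ i, a i ≤ b i) (hfR : ∀ i, MapsTo (f i) R (Icc (a i) (b i)))
    (J : Finset ι) :
    ∃ θ : ι → ℝ, (∀ i, θ i ∈ Icc (a i) (b i)) ∧ ∃ s : ι → Bool,
      μ R / 2 ^ J.card ≤ μ (R ∩ orthant J f θ s) ∧
      ν R / 2 ^ J.card ≤ ν (R ∩ orthant J f θ (not ∘ s)) := by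
  classical
  have div_two_pow_succ (m : ℝ≥0∞) (k : ℕ) : m / 2 ^ (k + 1) = m / 2 ^ k / 2 := by
    rw [pow_succ, div_eq_mul_inv, div_eq_mul_inv, div_eq_mul_inv,
      ENNReal.mul_inv (by simp) (by simp), mul_assoc]
  induction J using Finset.induction_on with
  | empty => exact ⟨a, fun i ↦ left_mem_Icc.2 (hab i), fun _ ↦ true, by simp, by simp⟩
  | insert i J hi ih =>
    obtain ⟨θ, hθ, s, hμ, hν⟩ := ih
    obtain ⟨t, ht, c, hμc, hνc⟩ := exists_opposite_halfLines_half_le (ν := ν)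
      (B := R ∩ orthant J f θ (not ∘ s)) (ne_top_of_le_ne_top hR (measure_mono inter_subset_left))
      (hf i) (hab i) ((hfR i).mono_left (inter_subset_left (t := orthant J f θ s)))
    refine ⟨Function.update θ i t,
      (Function.forall_update_iff _ fun j y ↦ y ∈ Icc (a j) (b j)).2 ⟨ht, fun j _ ↦ hθ j⟩,
      Function.update s i c, ?_, ?_⟩
    · rw [Finset.card_insert_of_notMem hi, orthant_insert_update hi, ← inter_assoc,
        div_two_pow_succ]
      exact (ENNReal.div_le_div_right hμ 2).trans hμc
    · rw [Finset.card_insert_of_notMem hi, Function.comp_update, orthant_insert_update hi,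
        ← inter_assoc, div_two_pow_succ]
      exact (ENNReal.div_le_div_right hν 2).trans hνc

theorem statement3 (n : ℕ) (a b : Fin n → ℝ) (hab : ∀ i, a i ≤ b i)
    (μ ν : Measure (EuclideanSpace ℝ (Fin n)))
    (R : Set (EuclideanSpace ℝ (Fin n)))
    (hR : R = {x | ∀ i, x i ∈ Set.Icc (a i) (b i)})
    (hμ : μ R ≠ ⊤) :
    ∃ θ : EuclideanSpace ℝ (Fin n), θ ∈ R ∧
      ∃ s : Fin n → Bool,
        μ R / 2 ^ n
            ≤ μ {x | ∀ i, if s i then x i ∈ Set.Icc (a i) (θ i)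
                else x i ∈ Set.Icc (θ i) (b i)} ∧
        ν R / 2 ^ n
            ≤ ν {x | ∀ i, if s i then x i ∈ Set.Icc (θ i) (b i)
                else x i ∈ Set.Icc (a i) (θ i)} ∧
        {x : EuclideanSpace ℝ (Fin n) | ∀ i, if s i then x i ∈ Set.Icc (a i) (θ i)
              else x i ∈ Set.Icc (θ i) (b i)} ∩
            {x | ∀ i, if s i then x i ∈ Set.Icc (θ i) (b i)
              else x i ∈ Set.Icc (a i) (θ i)} = {θ} ∧
        -- `G` and `H` lie in the closed opposite `n`-ants at `θ`
        {x : EuclideanSpace ℝ (Fin n) | ∀ i, if s i then x i ∈ Set.Icc (a i) (θ i)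
              else x i ∈ Set.Icc (θ i) (b i)}
            ⊆ {x | ∀ i, if s i then x i ≤ θ i else θ i ≤ x i} ∧
        {x : EuclideanSpace ℝ (Fin n) | ∀ i, if s i then x i ∈ Set.Icc (θ i) (b i)
              else x i ∈ Set.Icc (a i) (θ i)}
            ⊆ {x | ∀ i, if s i then θ i ≤ x i else x i ≤ θ i} := by
  subst hR
  obtain ⟨θ, hθ, s, hμG, hνH⟩ := exists_opposite_orthants_div_two_pow_le (ν := ν) hμ
    (f := fun i x ↦ x i) (fun i ↦ (EuclideanSpace.proj i).continuous.measurable) hab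
    (fun i _ hx ↦ hx i) Finset.univ
  rw [Finset.card_univ, Fintype.card_fin] at hμG hνH
  refine ⟨WithLp.toLp 2 θ, hθ, s, ?_⟩
  rw [setOf_forall_ite_mem_Icc_eq_inter_orthant hθ,
    setOf_forall_ite_mem_Icc_eq_inter_orthant_not hθ]
  refine ⟨hμG, hνH, ?_, inter_subset_right.trans fun x hx i ↦ hx i (Finset.mem_univ i),
    inter_subset_right.trans fun x hx i ↦ ?_⟩
  · rw [inter_inter_inter_comm, inter_self, orthant_inter_orthant_not]
    ext x
    simp only [mem_inter_iff, mem_ofPred_eq, Finset.mem_univ, true_imp_iff, mem_singleton_iff]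
    refine ⟨fun ⟨_, hx⟩ ↦ PiLp.ext hx, ?_⟩
    rintro rfl
    exact ⟨hθ, fun i ↦ rfl⟩
  · exact (mem_halfLine_not_iff _ _ _).1 (hx i (Finset.mem_univ i))
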